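/- Let u, v, p, q, r be real numbers, all greater than 1, such that 1/u + 1/v = 1 and 1/(u(p − 1)) + 1/(v(q − 1)) = 1/(r − 1); write p' = p/(p − 1), q' = q/(q − 1), r' = r/(r − 1). Set s = 1/(p v), t = 1/(q u), and let f(x) = (p s)^{1/(2p)} e^{−s x²/2} and g(x) = (q t)^{1/(2q)} e^{−t x²/2} (so ‖f‖_{L^p(d_N)} = ‖g‖_{L^q(d_N)} = 1). Then { ∫_ℝ [ ∫_ℝ f(x − y) g(y) exp( −(1/(2 p' q' r')) ((q'/v) x − r' y)² ) d_N y ]^r d_N x }^{1/r} = ( v^{1/r − 1/p} · u^{1/r − 1/q} )^{1/2}, i.e. these Gaussians achieve equality in the one-dimensional weighted Young-type inequality with constant C = ( v^{1/r − 1/p} u^{1/r − 1/q} )^{1/2}. -/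

import Mathlib

/-!
Completing the square in `y`, the exponent of `f (x - y) * g y * weight` is
`-(y - x/v)²/2 - x²/(2ruv)`; the two constraints on `u, v, p, q, r` are exactly what makes the
coefficients of `y²` and `x²` come out this way. The inner integral is therefore a unit-variance
Gaussian in `y`, leaving `K e^{-x²/(2ruv)}` with `K = v^{-1/(2p)} u^{-1/(2q)}`; its `r`-th power is a
Gaussian of variance `uv`, whose `d_N`-integral is `√(uv)`.
-/

open MeasureTheory Real

/-- The normalized Lebesgue measure `d_N x = (2π)^(−1/2) dx` on `ℝ`. -/
noncomputable def normalizedLebesgueR : Measure ℝ :=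
  ENNReal.ofReal ((2 * Real.pi) ^ (-(1 : ℝ) / 2)) • (volume : Measure ℝ)

theorem integral_exp_neg_sq_sub_div_normalizedLebesgueR (m : ℝ) {σ2 : ℝ} (hσ2 : 0 < σ2) :
    ∫ y, exp (-(y - m) ^ 2 / (2 * σ2)) ∂normalizedLebesgueR = √σ2 := by
  have h2π : 0 < 2 * π := by positivity
  have hlebesgue : ∫ y, exp (-(y - m) ^ 2 / (2 * σ2)) = √(2 * π * σ2) := by
    rw [integral_sub_right_eq_self (fun y => exp (-y ^ 2 / (2 * σ2))) m]
    have hquad : ∀ y : ℝ, -y ^ 2 / (2 * σ2) = -(1 / (2 * σ2)) * y ^ 2 := fun y => by ring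
    simp_rw [hquad, integral_gaussian]
    congr 1
    field_simp
  rw [normalizedLebesgueR, integral_smul_measure, ENNReal.toReal_ofReal (by positivity),
    hlebesgue, smul_eq_mul, sqrt_mul h2π.le, ← mul_assoc, sqrt_eq_rpow, ← rpow_add h2π]
  norm_num

theorem weighted_young_exponent_eq
    {u v p q r : ℝ} (hu : 1 < u) (hv : 1 < v) (hp : 1 < p) (hq : 1 < q) (hr : 1 < r)
    (huv : 1 / u + 1 / v = 1)
    (hcond : 1 / (u * (p - 1)) + 1 / (v * (q - 1)) = 1 / (r - 1)) (x y : ℝ) :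
    -(1 / (p * v)) * (x - y) ^ 2 / 2 + -(1 / (q * u)) * y ^ 2 / 2
      + -(1 / (2 * (p / (p - 1)) * (q / (q - 1)) * (r / (r - 1))))
        * (q / (q - 1) / v * x - r / (r - 1) * y) ^ 2
      = -(y - x / v) ^ 2 / (2 * 1) + -x ^ 2 / (2 * (r * u * v)) := by
  have hp1 : p - 1 ≠ 0 := by linarith
  have hq1 : q - 1 ≠ 0 := by linarith
  have hr1 : r - 1 ≠ 0 := by linarith
  have hu0 : u ≠ 0 := by positivity
  have hv0 : v ≠ 0 := by positivity
  have hp0 : p ≠ 0 := by positivity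
  have hq0 : q ≠ 0 := by positivity
  have hr0 : r ≠ 0 := by positivity
  field_simp at huv hcond
  have hyy : 1 / (p * v) + 1 / (q * u) + (p - 1) * (q - 1) * (r - 1) / (p * q * r) * (r / (r - 1)) ^ 2 = 1 := by
    field_simp
    linear_combination ((r - 1) * (p + q - 1)) * huv - hcond
  have hxy : 1 / (p * v) + (p - 1) * (q - 1) * (r - 1) / (p * q * r) * (q / (q - 1) / v) * (r / (r - 1)) = 1 / v := by
    field_simp
    ring
  have hxx : 1 / (p * v) + (p - 1) * (q - 1) * (r - 1) / (p * q * r) * (q / (q - 1) / v) ^ 2 = 1 / v ^ 2 + 1 / (r * u * v) := by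
    field_simp
    linear_combination (-(q - 1) * (p + r - 1)) * huv + hcond
  have hw : 1 / (2 * (p / (p - 1)) * (q / (q - 1)) * (r / (r - 1))) = (p - 1) * (q - 1) * (r - 1) / (p * q * r) / 2 := by
    field_simp
  rw [hw]
  linear_combination (-y ^ 2 / 2) * hyy + (x * y) * hxy - (x ^ 2 / 2) * hxx

theorem young_constant_eq {u v p q r : ℝ} (hu : 0 < u) (hv : 0 < v) (hr : r ≠ 0) :
    (((1 / v) ^ (1 / (2 * p)) * (1 / u) ^ (1 / (2 * q))) ^ r * √(u * v)) ^ (1 / r)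
      = (v ^ (1 / r - 1 / p) * u ^ (1 / r - 1 / q)) ^ ((1 : ℝ) / 2) := by
  refine log_injOn_pos (Set.mem_Ioi.2 (by positivity)) (Set.mem_Ioi.2 (by positivity)) ?_
  simp (disch := positivity) only [log_rpow, log_mul, log_sqrt, one_div, log_inv]
  field_simp
  ring

theorem weighted_young_equality_case
    (u v p q r : ℝ)
    (hu : 1 < u) (hv : 1 < v) (hp : 1 < p) (hq : 1 < q) (hr : 1 < r)
    (huv : 1 / u + 1 / v = 1)
    (hcond : 1 / (u * (p - 1)) + 1 / (v * (q - 1)) = 1 / (r - 1))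
    (p' q' r' : ℝ) (hp' : p' = p / (p - 1)) (hq' : q' = q / (q - 1)) (hr' : r' = r / (r - 1))
    (s t : ℝ) (hs : s = 1 / (p * v)) (ht : t = 1 / (q * u))
    (f g : ℝ → ℝ)
    (hf : ∀ x, f x = (p * s) ^ (1 / (2 * p)) * Real.exp (-s * x ^ 2 / 2))
    (hg : ∀ x, g x = (q * t) ^ (1 / (2 * q)) * Real.exp (-t * x ^ 2 / 2)) :
    (∫ x, (∫ y, f (x - y) * g y
          * Real.exp (-(1 / (2 * p' * q' * r')) * ((q' / v) * x - r' * y) ^ 2)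
          ∂normalizedLebesgueR) ^ r ∂normalizedLebesgueR) ^ (1 / r)
    = (v ^ (1 / r - 1 / p) * u ^ (1 / r - 1 / q)) ^ ((1 : ℝ) / 2) := by
  subst hp' hq' hr' hs ht
  have hu0 : 0 < u := by linarith
  have hv0 : 0 < v := by linarith
  have hps : p * (1 / (p * v)) = 1 / v := by field_simp
  have hqt : q * (1 / (q * u)) = 1 / u := by field_simp
  set K := (1 / v) ^ (1 / (2 * p)) * (1 / u) ^ (1 / (2 * q))
  have hinner : ∀ x, ∫ y, f (x - y) * g y * exp (-(1 / (2 * (p / (p - 1)) * (q / (q - 1))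
        * (r / (r - 1)))) * (q / (q - 1) / v * x - r / (r - 1) * y) ^ 2) ∂normalizedLebesgueR
      = K * exp (-x ^ 2 / (2 * (r * u * v))) := by
    intro x
    have hintegrand : ∀ y, f (x - y) * g y * exp (-(1 / (2 * (p / (p - 1)) * (q / (q - 1))
          * (r / (r - 1)))) * (q / (q - 1) / v * x - r / (r - 1) * y) ^ 2)
        = K * (exp (-(y - x / v) ^ 2 / (2 * 1)) * exp (-x ^ 2 / (2 * (r * u * v)))) := by
      intro y
      rw [← exp_add, ← weighted_young_exponent_eq hu hv hp hq hr huv hcond,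
        exp_add, exp_add, hf, hg, hps, hqt]
      ring
    simp_rw [hintegrand, integral_const_mul, integral_mul_const,
      integral_exp_neg_sq_sub_div_normalizedLebesgueR _ one_pos, sqrt_one, one_mul]
  have hpow : ∀ x, (K * exp (-x ^ 2 / (2 * (r * u * v)))) ^ r
      = K ^ r * exp (-(x - 0) ^ 2 / (2 * (u * v))) := by
    intro x
    rw [mul_rpow (by positivity) (exp_pos _).le, ← exp_mul]
    congr 2
    field_simp
    ring
  simp_rw [hinner, hpow, integral_const_mul,
    integral_exp_neg_sq_sub_div_normalizedLebesgueR 0 (mul_pos hu0 hv0)]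
  exact young_constant_eq hu0 hv0 (by positivity)
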